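/- arXiv:2109.12401 — 5 statements merged into one kernel-verified Lean document; each statement's English description precedes it below -/
import Mathlib

section
/- Let γ ∈ [1, 3/2) be real and let (R_ℓ)_{ℓ≥0} be a sequence of positive reals satisfying R_ℓ ≥ ((γ-1)/(3-2γ)) · Σ_{k=0}^{ℓ-1} R_k for every ℓ ≥ 1. Then for every ℓ ≥ 1 it holds that R_ℓ ≥ ((γ-1)/(2-γ)) · ((2-γ)/(3-2γ))^ℓ · R_0. -/
open Finset

section SumDominated

variable {K : Type*} [CommRing K] [LinearOrder K] [IsStrictOrderedRing K] {a : K} {R : ℕ → K}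

theorem pow_mul_le_sum_range_succ_of_mul_sum_le (ha : 0 ≤ 1 + a)
    (hrec : ∀ ℓ, 1 ≤ ℓ → a * ∑ k ∈ range ℓ, R k ≤ R ℓ) (n : ℕ) :
    (1 + a) ^ n * R 0 ≤ ∑ k ∈ range (n + 1), R k := by
  induction n with
  | zero => simp
  | succ n ih =>
    have hstep : (1 + a) * ∑ k ∈ range (n + 1), R k ≤ ∑ k ∈ range (n + 2), R k := by
      rw [sum_range_succ _ (n + 1)]
      linarith [hrec (n + 1) (by omega)]
    calc (1 + a) ^ (n + 1) * R 0 = (1 + a) * ((1 + a) ^ n * R 0) := by ring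
      _ ≤ (1 + a) * ∑ k ∈ range (n + 1), R k := mul_le_mul_of_nonneg_left ih ha
      _ ≤ _ := hstep

theorem mul_pow_mul_le_of_mul_sum_le (ha : 0 ≤ a)
    (hrec : ∀ ℓ, 1 ≤ ℓ → a * ∑ k ∈ range ℓ, R k ≤ R ℓ) (n : ℕ) :
    a * (1 + a) ^ n * R 0 ≤ R (n + 1) :=
  calc a * (1 + a) ^ n * R 0 = a * ((1 + a) ^ n * R 0) := mul_assoc _ _ _
    _ ≤ a * ∑ k ∈ range (n + 1), R k :=
      mul_le_mul_of_nonneg_left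
        (pow_mul_le_sum_range_succ_of_mul_sum_le (by linarith) hrec n) ha
    _ ≤ R (n + 1) := hrec (n + 1) (by omega)

end SumDominated

theorem stmt_0_general (γ : ℝ) (hγ1 : 1 ≤ γ) (hγ2 : γ < 3/2)
    (R : ℕ → ℝ)
    (hrec : ∀ ℓ : ℕ, 1 ≤ ℓ → R ℓ ≥ (γ - 1) / (3 - 2*γ) * ∑ k ∈ Finset.range ℓ, R k) :
    ∀ ℓ : ℕ, 1 ≤ ℓ →
      R ℓ ≥ (γ - 1) / (2 - γ) * ((2 - γ) / (3 - 2*γ))^ℓ * R 0 := by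
  have h3 : 0 < 3 - 2*γ := by linarith
  have h2 : 0 < 2 - γ := by linarith
  have ha : 0 ≤ (γ - 1) / (3 - 2*γ) := div_nonneg (by linarith) h3.le
  have hratio : 1 + (γ - 1) / (3 - 2*γ) = (2 - γ) / (3 - 2*γ) := by
    rw [one_add_div h3.ne']; ring
  intro ℓ hℓ
  obtain ⟨n, rfl⟩ := Nat.exists_eq_add_of_le' hℓ
  have hbound := mul_pow_mul_le_of_mul_sum_le ha hrec n
  rw [hratio] at hbound
  calc (γ - 1) / (2 - γ) * ((2 - γ) / (3 - 2*γ)) ^ (n + 1) * R 0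
      = (γ - 1) / (3 - 2*γ) * ((2 - γ) / (3 - 2*γ)) ^ n * R 0 := by
        rw [pow_succ]; field_simp
    _ ≤ R (n + 1) := hbound

theorem stmt_0 (γ : ℝ) (hγ1 : 1 ≤ γ) (hγ2 : γ < 3/2)
    (R : ℕ → ℝ) (hpos : ∀ ℓ, 0 < R ℓ)
    (hrec : ∀ ℓ : ℕ, 1 ≤ ℓ → R ℓ ≥ (γ - 1) / (3 - 2*γ) * ∑ k ∈ Finset.range ℓ, R k) :
    ∀ ℓ : ℕ, 1 ≤ ℓ →
      R ℓ ≥ (γ - 1) / (2 - γ) * ((2 - γ) / (3 - 2*γ))^ℓ * R 0 :=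
  stmt_0_general γ hγ1 hγ2 R hrec
end

section
/- Let γ ∈ [1, 3/2) and let (R_ℓ)_{ℓ≥0}, (Ĥ_ℓ)_{ℓ≥0} be sequences of reals with R_ℓ > 0 for all ℓ. Suppose that for every ℓ ≥ 1 we have 2(Ĥ_ℓ - R_ℓ) ≤ R_ℓ - Σ_{k=0}^{ℓ-1}(Ĥ_k - R_k), and that Ĥ_k ≥ γ R_k for all k. Then for every ℓ ≥ 1, R_ℓ ≥ ((γ-1)/(3-2γ)) · Σ_{k=0}^{ℓ-1} R_k. -/
lemma Finset.mul_sum_sub_le_sum_sub {ι : Type*} (s : Finset ι) (γ : ℝ) (R H : ι → ℝ)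
    (hγR : ∀ k ∈ s, γ * R k ≤ H k) :
    (γ - 1) * ∑ k ∈ s, R k ≤ ∑ k ∈ s, (H k - R k) := by
  rw [Finset.mul_sum]
  exact Finset.sum_le_sum fun k hk => by linarith [hγR k hk]

theorem stmt_2_general (γ : ℝ) (hγ2 : γ < 3/2)
    (R H : ℕ → ℝ)
    (hbound : ∀ ℓ : ℕ, 1 ≤ ℓ →
      2 * (H ℓ - R ℓ) ≤ R ℓ - ∑ k ∈ Finset.range ℓ, (H k - R k))
    (hγR : ∀ k, H k ≥ γ * R k) :
    ∀ ℓ : ℕ, 1 ≤ ℓ →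
      R ℓ ≥ (γ - 1) / (3 - 2*γ) * ∑ k ∈ Finset.range ℓ, R k := by
  intro ℓ hℓ
  have hpast := (Finset.range ℓ).mul_sum_sub_le_sum_sub γ R H fun k _ => hγR k
  have hkey : (γ - 1) * ∑ k ∈ Finset.range ℓ, R k ≤ (3 - 2 * γ) * R ℓ := by
    linarith [hbound ℓ hℓ, hγR ℓ]
  rw [ge_iff_le, div_mul_eq_mul_div, div_le_iff₀ (by linarith)]
  linarith

theorem stmt_2 (γ : ℝ) (hγ1 : 1 ≤ γ) (hγ2 : γ < 3/2)
    (R H : ℕ → ℝ) (hpos : ∀ ℓ, 0 < R ℓ)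
    (hbound : ∀ ℓ : ℕ, 1 ≤ ℓ →
      2 * (H ℓ - R ℓ) ≤ R ℓ - ∑ k ∈ Finset.range ℓ, (H k - R k))
    (hγR : ∀ k, H k ≥ γ * R k) :
    ∀ ℓ : ℕ, 1 ≤ ℓ →
      R ℓ ≥ (γ - 1) / (3 - 2*γ) * ∑ k ∈ Finset.range ℓ, R k :=
  stmt_2_general γ hγ2 R H hbound hγR
end

section
/- Define for natural numbers m ≥ 1 and 1 ≤ i ≤ m the real number F_i(m) = [ (√2+1)^{m+1} (1 - ((2-√2)/2)^i) + (√2-1)^{m+1} (1 - ((2+√2)/2)^i) ] / [ (√2-1)^{m+1} + (√2+1)^{m+1} ]. Then F_i(m) is nondecreasing in i, i.e., F_{i+1}(m) ≥ F_i(m) for all 1 ≤ i ≤ m-1. -/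
noncomputable def F (m i : ℕ) : ℝ :=
  ((Real.sqrt 2 + 1)^(m+1) * (1 - ((2 - Real.sqrt 2)/2)^i)
   + (Real.sqrt 2 - 1)^(m+1) * (1 - ((2 + Real.sqrt 2)/2)^i))
  / ((Real.sqrt 2 - 1)^(m+1) + (Real.sqrt 2 + 1)^(m+1))

/-!
Write `a = √2 - 1`, `b = √2 + 1` and `q = √2 / 2`, so that `a * b = 1`, `(2 - √2) / 2 = a * q`,
`(2 + √2) / 2 = b * q`, `1 - a * q = q` and `1 - b * q = -q`. With `m + 1 = i + k`, the numerator of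
`F m (i + 1) - F m i` then collapses to `q ^ (i + 1) * (b ^ k - a ^ k)`, which is nonnegative because
`0 < a < b`.
-/

open Real

section CommRing

variable {R : Type*} [CommRing R]

theorem sub_eq_pow_succ_mul_sub_pow {a b q : R} (hab : a * b = 1) (haq : 1 - a * q = q)
    (hbq : 1 - b * q = -q) (i k : ℕ) :
    (b ^ (i + k) * (1 - (a * q) ^ (i + 1)) + a ^ (i + k) * (1 - (b * q) ^ (i + 1)))
      - (b ^ (i + k) * (1 - (a * q) ^ i) + a ^ (i + k) * (1 - (b * q) ^ i))
      = q ^ (i + 1) * (b ^ k - a ^ k) := by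
  have habi : a ^ i * b ^ i = 1 := by rw [← mul_pow, hab, one_pow]
  linear_combination (q ^ (i + 1) * (b ^ k - a ^ k)) * habi
    + (b ^ (i + k) * (a * q) ^ i) * haq + (a ^ (i + k) * (b * q) ^ i) * hbq

end CommRing

theorem sqrt_two_sub_one_mul_sqrt_two_add_one : (√2 - 1) * (√2 + 1) = 1 := by
  linear_combination sq_sqrt (zero_le_two : (0 : ℝ) ≤ 2)

theorem F_succ_sub_F {m i k : ℕ} (hk : m + 1 = i + k) :
    F m (i + 1) - F m i
      = (√2 / 2) ^ (i + 1) * ((√2 + 1) ^ k - (√2 - 1) ^ k)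
        / ((√2 - 1) ^ (m + 1) + (√2 + 1) ^ (m + 1)) := by
  have h2 : √2 ^ 2 = 2 := sq_sqrt zero_le_two
  have ha : (2 - √2) / 2 = (√2 - 1) * (√2 / 2) := by linear_combination -h2 / 2
  have hb : (2 + √2) / 2 = (√2 + 1) * (√2 / 2) := by linear_combination -h2 / 2
  rw [F, F, ← sub_div, ha, hb, hk]
  congr 1
  exact sub_eq_pow_succ_mul_sub_pow sqrt_two_sub_one_mul_sqrt_two_add_one
    (by linear_combination -h2 / 2) (by linear_combination -h2 / 2) i k

theorem F_le_F_succ {m i : ℕ} (hi : i ≤ m + 1) : F m i ≤ F m (i + 1) := by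
  obtain ⟨k, hk⟩ : ∃ k, m + 1 = i + k := ⟨m + 1 - i, by omega⟩
  have hs : 1 < √2 := by rw [lt_sqrt zero_le_one]; norm_num
  rw [← sub_nonneg, F_succ_sub_F hk]
  have hpow : (√2 - 1) ^ k ≤ (√2 + 1) ^ k := pow_le_pow_left₀ (by linarith) (by linarith) k
  have hden : 0 < (√2 - 1) ^ (m + 1) + (√2 + 1) ^ (m + 1) := by
    have : 0 < √2 - 1 := by linarith
    positivity
  exact div_nonneg (mul_nonneg (by positivity) (sub_nonneg.2 hpow)) hden.le

theorem stmt_8_general (m : ℕ) :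
    ∀ i : ℕ, 1 ≤ i → i ≤ m - 1 → F m (i+1) ≥ F m i :=
  fun _ _ hi => F_le_F_succ (by omega)

theorem stmt_8 (m : ℕ) (hm : 1 ≤ m) :
    ∀ i : ℕ, 1 ≤ i → i ≤ m - 1 → F m (i+1) ≥ F m i :=
  stmt_8_general m
end

section
/- With F_i(m) as defined (F_i(m) = [ (√2+1)^{m+1}(1 - ((2-√2)/2)^i) + (√2-1)^{m+1}(1 - ((2+√2)/2)^i) ] / [ (√2-1)^{m+1} + (√2+1)^{m+1} ]), setting f_1(m) = F_1(m) - 0 = F_1(m), the quantity F_1(m) + f_1(m) = 2F_1(m) converges to √2 as m → ∞. -/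
/-!
Since `1 - (2 ∓ √2)/2 = ±√2/2`, the quantity `2 F_1(m)` equals `√2 (aⁿ - bⁿ)/(aⁿ + bⁿ)` with
`a = √2 + 1`, `b = √2 - 1`, `n = m + 1`. Dividing through by `aⁿ` turns the fraction into
`(1 - qⁿ)/(1 + qⁿ)` with `q = b/a ∈ (0, 1)`, which tends to `1`.
-/

open Filter Topology

lemma tendsto_pow_sub_pow_div_pow_add_pow {a b : ℝ} (hab : |b| < a) :
    Tendsto (fun n : ℕ => (a ^ n - b ^ n) / (a ^ n + b ^ n)) atTop (𝓝 1) := by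
  have ha : 0 < a := (abs_nonneg b).trans_lt hab
  have hq : |b / a| < 1 := by rwa [abs_div, abs_of_pos ha, div_lt_one ha]
  have hqn := tendsto_pow_atTop_nhds_zero_of_abs_lt_one hq
  have hlim : Tendsto (fun n : ℕ => (1 - (b / a) ^ n) / (1 + (b / a) ^ n)) atTop (𝓝 1) := by
    simpa [Pi.div_def] using (tendsto_const_nhds.sub hqn).div (tendsto_const_nhds.add hqn)
      (by norm_num : (1 : ℝ) + 0 ≠ 0)
  refine hlim.congr fun n => ?_
  have han : a ^ n ≠ 0 := pow_ne_zero n ha.ne'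
  rw [div_pow, one_sub_div han, one_add_div han, div_div_div_cancel_right₀ han]

lemma two_mul_F_one (m : ℕ) :
    2 * F m 1 = √2 * (((√2 + 1) ^ (m + 1) - (√2 - 1) ^ (m + 1))
      / ((√2 + 1) ^ (m + 1) + (√2 - 1) ^ (m + 1))) := by
  rw [F, pow_one, pow_one, add_comm ((√2 - 1) ^ (m + 1))]
  ring

theorem stmt_9 :
    Filter.Tendsto (fun m : ℕ => 2 * F m 1) Filter.atTop (nhds (Real.sqrt 2)) := by
  have hs : 1 < √2 := by
    rw [Real.lt_sqrt zero_le_one]; norm_num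
  have hab : |√2 - 1| < √2 + 1 := by
    rw [abs_of_pos (sub_pos.mpr hs)]; linarith
  have hlim := ((tendsto_pow_sub_pow_div_pow_add_pow hab).comp
    (tendsto_add_atTop_nat 1)).const_mul √2
  rw [mul_one] at hlim
  simpa only [two_mul_F_one, Function.comp_def] using hlim
end

section
/- Let n ≥ 1 and let w, R, D : Fin n → ℝ with w_k > 0 and D_k ≥ 0. Say an allocation r : Fin n → ℝ≥0 with r_k ≤ D_k is 'locally fair' (with respect to totals R, weights w, demands D, and guarantees g : Fin n → ℝ≥0) if for every pair of users i ≠ j with r_i > g_i and r_j < D_j, it holds that (R_i + r_i)/w_i ≤ (R_j + r_j)/w_j. Suppose r̄ is locally fair w.r.t. (R̄, w, D̄, g) and r̂ is locally fair w.r.t. (R̂, w, D̂, g), and suppose users i ≠ j satisfy: r̄_i < r̂_i, D̂_i ≤ D̄_i, r̄_j > r̂_j, D̄_j ≤ D̂_j, and g_i ≤ r̄_i. Then (R̄_i + r̄_i)/w_i ≥ (R̄_j + r̄_j)/w_j and (R̂_i + r̂_i)/w_i ≤ (R̂_j + r̂_j)/w_j; consequently (R̂_i + r̂_i - R̄_i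 - r̄_i)/w_i ≤ (R̂_j + r̂_j - R̄_j - r̄_j)/w_j. -/
/-- `r` is a locally fair allocation w.r.t. prior totals `R`, weights `w`,
demands `D`, and guarantees `g`. -/
def LocallyFair {n : ℕ} (w R D g r : Fin n → ℝ) : Prop :=
  (∀ k, 0 ≤ r k ∧ r k ≤ D k) ∧
  ∀ i j, i ≠ j → g i < r i → r j < D j →
    (R i + r i) / w i ≤ (R j + r j) / w j

namespace LocallyFair

variable {n : ℕ} {w R R' D D' g r r' : Fin n → ℝ} {i j : Fin n}

theorem le_demand (h : LocallyFair w R D g r) (k : Fin n) : r k ≤ D k :=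
  (h.1 k).2

theorem div_le_div_of_exchange (h : LocallyFair w R D g r) (h' : LocallyFair w R' D' g r')
    (hij : i ≠ j) (hgi : g i ≤ r i) (hri : r i < r' i) (hrj : r' j < r j) (hDj : D j ≤ D' j) :
    (R' i + r' i) / w i ≤ (R' j + r' j) / w j :=
  h'.2 i j hij (hgi.trans_lt hri) (hrj.trans_le ((h.le_demand j).trans hDj))

end LocallyFair

theorem stmt_11_general {n : ℕ}
    (w Rbar Rhat Dbar Dhat g : Fin n → ℝ) (rbar rhat : Fin n → ℝ)
    (hbar : LocallyFair w Rbar Dbar g rbar)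
    (hhat : LocallyFair w Rhat Dhat g rhat)
    (i j : Fin n) (hij : i ≠ j)
    (hri : rbar i < rhat i) (hDi : Dhat i ≤ Dbar i)
    (hrj : rhat j < rbar j) (hDj : Dbar j ≤ Dhat j)
    (hgi : g i ≤ rbar i) (hgj : g j ≤ rhat j) :
    (Rbar i + rbar i) / w i ≥ (Rbar j + rbar j) / w j ∧
    (Rhat i + rhat i) / w i ≤ (Rhat j + rhat j) / w j ∧
    (Rhat i + rhat i - Rbar i - rbar i) / w i
      ≤ (Rhat j + rhat j - Rbar j - rbar j) / w j := by
  have hbar_ji := hhat.div_le_div_of_exchange hbar hij.symm hgj hrj hri hDi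
  have hhat_ij := hbar.div_le_div_of_exchange hhat hij hgi hri hrj hDj
  refine ⟨hbar_ji, hhat_ij, ?_⟩
  rw [sub_sub, sub_div, sub_sub, sub_div]
  linarith

theorem stmt_11 {n : ℕ} (hn : 1 ≤ n)
    (w Rbar Rhat Dbar Dhat g : Fin n → ℝ) (rbar rhat : Fin n → ℝ)
    (hw : ∀ k, 0 < w k) (hD : ∀ k, 0 ≤ Dbar k ∧ 0 ≤ Dhat k) (hg : ∀ k, 0 ≤ g k)
    (hbar : LocallyFair w Rbar Dbar g rbar)
    (hhat : LocallyFair w Rhat Dhat g rhat)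
    (i j : Fin n) (hij : i ≠ j)
    (hri : rbar i < rhat i) (hDi : Dhat i ≤ Dbar i)
    (hrj : rhat j < rbar j) (hDj : Dbar j ≤ Dhat j)
    (hgi : g i ≤ rbar i) (hgj : g j ≤ rhat j) :
    (Rbar i + rbar i) / w i ≥ (Rbar j + rbar j) / w j ∧
    (Rhat i + rhat i) / w i ≤ (Rhat j + rhat j) / w j ∧
    (Rhat i + rhat i - Rbar i - rbar i) / w i
      ≤ (Rhat j + rhat j - Rbar j - rbar j) / w j :=
  stmt_11_general w Rbar Rhat Dbar Dhat g rbar rhat hbar hhat i j hij hri hDi hrj hDj hgi hgj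
end
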